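/- Let K be a number field obtained by adjoining a root of a monic polynomial f(x) ∈ ℤ[x], let p be a prime number and 𝔭 a prime ideal of K lying over p. If f(x) ≡ (x−c)²·h̄(x) (mod p) for some integer c and a polynomial h̄(x) that is separable modulo p with h̄(c) ≢ 0 (mod p), then the inertia group of 𝔭 over ℚ is either trivial or a group generated by a transposition (in the Galois group of f acting on the roots of f). -/
import Mathlib


open Polynomial

set_option maxHeartbeats 2000000
set_option synthInstance.maxHeartbeats 1000000

lemma aux_two_roots_dvd {R : Type*} [CommRing R] [IsDomain R] {q : R[X]} {r s : R}
    (hr : q.IsRoot r) (hs : q.IsRoot s) (hrs : r ≠ s) : (X - C r) * (X - C s) ∣ q := by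
  obtain ⟨g, rfl⟩ := (dvd_iff_isRoot.2 hr)
  have hg : g.IsRoot s := by
    have := hs
    simp only [IsRoot, eval_mul, eval_sub, eval_X, eval_C] at this
    rcases mul_eq_zero.1 this with h | h
    · exact absurd (sub_eq_zero.1 h) (Ne.symm hrs)
    · exact h
  exact mul_dvd_mul_left _ (dvd_iff_isRoot.2 hg)

lemma aux_three_roots_dvd {R : Type*} [CommRing R] [IsDomain R] {q : R[X]} {r s t : R}
    (hr : q.IsRoot r) (hs : q.IsRoot s) (ht : q.IsRoot t)
    (hrs : r ≠ s) (hrt : r ≠ t) (hst : s ≠ t) :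
    (X - C r) * (X - C s) * (X - C t) ∣ q := by
  obtain ⟨g, rfl⟩ := aux_two_roots_dvd hr hs hrs
  have hg : g.IsRoot t := by
    have := ht
    simp only [IsRoot, eval_mul, eval_sub, eval_X, eval_C] at this
    rcases mul_eq_zero.1 this with h | h
    · rcases mul_eq_zero.1 h with h' | h'
      · exact absurd (sub_eq_zero.1 h') (Ne.symm hrt)
      · exact absurd (sub_eq_zero.1 h') (Ne.symm hst)
    · exact h
  exact mul_dvd_mul_left _ (dvd_iff_isRoot.2 hg)

lemma aux_claim {D : Type*} [CommRing D] [IsDomain D] {F hh : D[X]} {cc : D}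
    (hF : F = (X - C cc) ^ 2 * hh) (hsep : hh.Separable) (hnz : hh.eval cc ≠ 0) :
    (∀ ρ : D, (X - C ρ) ^ 2 ∣ F → ρ = cc) ∧ ¬ (X - C cc) ^ 3 ∣ F := by
  have hh0 : hh ≠ 0 := fun h => hnz (by simp [h])
  have hF0 : F ≠ 0 := by
    rw [hF]
    exact mul_ne_zero (pow_ne_zero _ (X_sub_C_ne_zero cc)) hh0
  have hmul0 : (X - C cc) ^ 2 * hh ≠ 0 := hF ▸ hF0
  constructor
  · intro ρ hdvd
    by_contra hne
    have h2 : 2 ≤ rootMultiplicity ρ F := (le_rootMultiplicity_iff hF0).2 hdvd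
    rw [hF, rootMultiplicity_mul hmul0] at h2
    have hz : rootMultiplicity ρ ((X - C cc) ^ 2) = 0 := by
      apply rootMultiplicity_eq_zero
      simp only [IsRoot, eval_pow, eval_sub, eval_X, eval_C]
      exact pow_ne_zero _ (sub_ne_zero.2 hne)
    rw [hz, zero_add] at h2
    have hdvd' : (X - C ρ) * (X - C ρ) ∣ hh := by
      rw [← pow_two]
      exact (le_rootMultiplicity_iff hh0).1 h2
    exact not_isUnit_X_sub_C ρ (hsep.squarefree _ hdvd')
  · intro hdvd
    have h3 : 3 ≤ rootMultiplicity cc F := (le_rootMultiplicity_iff hF0).2 hdvd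
    rw [hF, rootMultiplicity_mul hmul0, rootMultiplicity_X_sub_C_pow] at h3
    have : 0 < rootMultiplicity cc hh := by omega
    exact hnz ((rootMultiplicity_pos hh0).1 this)

/-- **Lemma (inertia groups and transpositions)**: let `f ∈ ℤ[x]` be monic with splitting
field `L` over `ℚ`, let `p` be a prime number and `𝔭` a prime ideal of the ring of integers
of `L` lying over `p`.  If `f(x) ≡ (x−c)²·h̄(x) (mod p)` for some integer `c` and a polynomial
`h̄` which is separable mod `p` with `h̄(c) ≢ 0 (mod p)`, then the inertia group of `𝔭` over
`ℚ` is either trivial or generated by a transposition of the roots of `f`. -/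
theorem inertia_group_trivial_or_generated_by_transposition
    (f : Polynomial ℤ) (hf : f.Monic) (p : ℕ) (hp : p.Prime)
    (c : ℤ) (hbar : Polynomial (ZMod p))
    (hfact : f.map (Int.castRingHom (ZMod p)) = (X - C (c : ZMod p)) ^ 2 * hbar)
    (hsep : hbar.Separable) (hnz : hbar.eval (c : ZMod p) ≠ 0)
    -- the splitting field `L` of `f` over `ℚ`
    (𝔭 : Ideal (integralClosure ℤ (f.map (Int.castRingHom ℚ)).SplittingField))
    (h𝔭 : 𝔭.IsPrime)
    (hover : 𝔭.comap (algebraMap ℤ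
        (integralClosure ℤ (f.map (Int.castRingHom ℚ)).SplittingField)) =
      Ideal.span {(p : ℤ)}) :
    -- the inertia group of `𝔭` over `ℚ`, as a subset of `Gal(L/ℚ)`: those `σ` with
    -- `σ x ≡ x (mod 𝔭)` for every algebraic integer `x` of `L`
    let L := (f.map (Int.castRingHom ℚ)).SplittingField
    let inertia : Set (L ≃ₐ[ℚ] L) :=
      {σ | ∀ x y : integralClosure ℤ L, (y : L) = σ (x : L) - (x : L) → y ∈ 𝔭}
    -- conclusion: `inertia` is trivial or generated by a transposition of the roots of `f`
    inertia = {1} ∨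
      ∃ σ : L ≃ₐ[ℚ] L,
        (∃ r s : L, aeval r f = 0 ∧ aeval s f = 0 ∧ r ≠ s ∧ σ r = s ∧ σ s = r ∧
          ∀ u : L, aeval u f = 0 → u ≠ r → u ≠ s → σ u = u) ∧
        inertia = (Subgroup.zpowers σ : Set (L ≃ₐ[ℚ] L)) := by
  intro L inertia
  haveI := h𝔭
  haveI := Fact.mk hp
  haveI : IsDomain ((integralClosure ℤ L) ⧸ 𝔭) := by infer_instance
  -- the map ψ : ZMod p →+* (integralClosure ℤ L) ⧸ 𝔭
  have hφker : ∀ a ∈ Ideal.span {(p : ℤ)},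
      ((Ideal.Quotient.mk 𝔭).comp (algebraMap ℤ (integralClosure ℤ L))) a = 0 := by
    intro a ha
    rw [← hover, Ideal.mem_comap] at ha
    exact Ideal.Quotient.eq_zero_iff_mem.2 ha
  set ψ := (Ideal.Quotient.lift _ _ hφker).comp
      ((Int.quotientSpanNatEquivZMod p).symm : ZMod p →+* ℤ ⧸ Ideal.span {(p : ℤ)}) with hψdef
  have hψinj : Function.Injective ψ := ψ.injective
  have hcomp : ψ.comp (Int.castRingHom (ZMod p)) =
      (Ideal.Quotient.mk 𝔭).comp (algebraMap ℤ (integralClosure ℤ L)) := by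
    apply RingHom.ext_int
  have hFfact : (f.map (algebraMap ℤ (integralClosure ℤ L))).map (Ideal.Quotient.mk 𝔭) =
      (X - C (ψ (c : ZMod p))) ^ 2 * (hbar.map ψ) := by
    rw [Polynomial.map_map, ← hcomp, ← Polynomial.map_map, hfact]
    simp [Polynomial.map_mul, Polynomial.map_pow]
  obtain ⟨claimA, claimB⟩ := aux_claim hFfact (hsep.map)
    (by
      rw [eval_map, eval₂_hom]
      exact fun h => hnz (hψinj (by simpa using h)))
  -- roots are integral
  have hint : ∀ u : L, aeval u f = 0 → u ∈ integralClosure ℤ L := by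
    intro u hu
    exact ⟨f, hf, by rwa [← aeval_def]⟩
  -- roots as roots in the integral closure
  have hrootA : ∀ u : integralClosure ℤ L, aeval (u : L) f = 0 →
      (f.map (algebraMap ℤ (integralClosure ℤ L))).IsRoot u := by
    intro u hu
    have key := aeval_algHom_apply (integralClosure ℤ L).val u f
    have h1 : aeval u f = 0 := by
      apply Subtype.ext
      simpa [hu] using key.symm
    simpa only [IsRoot, eval_map, ← aeval_def] using h1
  -- two distinct roots with the same reduction must reduce to c
  have keypair : ∀ u v : integralClosure ℤ L, aeval (u : L) f = 0 → aeval (v : L) f = 0 →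
      (u : L) ≠ (v : L) → Ideal.Quotient.mk 𝔭 u = Ideal.Quotient.mk 𝔭 v →
      Ideal.Quotient.mk 𝔭 u = ψ (c : ZMod p) := by
    intro u v hu hv huv hm
    apply claimA
    have hd := aux_two_roots_dvd (hrootA u hu) (hrootA v hv)
      (fun e => huv (congrArg _ e))
    have hd2 := Polynomial.map_dvd (Ideal.Quotient.mk 𝔭) hd
    simp only [Polynomial.map_mul, Polynomial.map_sub, map_X, map_C] at hd2
    rw [← hm] at hd2
    rwa [← pow_two] at hd2
  -- three distinct roots cannot share a reduction
  have keytriple : ∀ u v w : integralClosure ℤ L,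
      aeval (u : L) f = 0 → aeval (v : L) f = 0 → aeval (w : L) f = 0 →
      (u : L) ≠ (v : L) → (u : L) ≠ (w : L) → (v : L) ≠ (w : L) →
      Ideal.Quotient.mk 𝔭 u = Ideal.Quotient.mk 𝔭 v →
      Ideal.Quotient.mk 𝔭 u = Ideal.Quotient.mk 𝔭 w → False := by
    intro u v w hu hv hw huv huw hvw hm1 hm2
    have hd := aux_three_roots_dvd (hrootA u hu) (hrootA v hv) (hrootA w hw)
      (fun e => huv (congrArg _ e)) (fun e => huw (congrArg _ e)) (fun e => hvw (congrArg _ e))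
    have hd2 := Polynomial.map_dvd (Ideal.Quotient.mk 𝔭) hd
    simp only [Polynomial.map_mul, Polynomial.map_sub, map_X, map_C] at hd2
    rw [← hm1, ← hm2] at hd2
    have hd3 : (X - C (Ideal.Quotient.mk 𝔭 u)) ^ 3 ∣
        (f.map (algebraMap ℤ (integralClosure ℤ L))).map (Ideal.Quotient.mk 𝔭) := by
      have e : (X - C (Ideal.Quotient.mk 𝔭 u)) * (X - C (Ideal.Quotient.mk 𝔭 u)) *
          (X - C (Ideal.Quotient.mk 𝔭 u)) = (X - C (Ideal.Quotient.mk 𝔭 u)) ^ 3 := by ring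
      rwa [e] at hd2
    have hc : Ideal.Quotient.mk 𝔭 u = ψ (c : ZMod p) :=
      claimA _ (dvd_trans (pow_dvd_pow _ (by norm_num)) hd3)
    rw [hc] at hd3
    exact claimB hd3
  -- 1 is in inertia
  have hone : (1 : L ≃ₐ[ℚ] L) ∈ inertia := by
    intro x y hy
    have h0 : (y : L) = 0 := by simpa using hy
    have hy0 : y = 0 := Subtype.ext (by simpa using h0)
    rw [hy0]
    exact 𝔭.zero_mem
  -- automorphisms preserve integrality
  have hσint : ∀ (σ : L ≃ₐ[ℚ] L) (x : L), x ∈ integralClosure ℤ L →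
      σ x ∈ integralClosure ℤ L := by
    intro σ x hx
    exact IsIntegral.map (AlgHom.restrictScalars ℤ σ.toAlgHom) hx
  -- elements of inertia preserve reductions
  have hred : ∀ σ : L ≃ₐ[ℚ] L, σ ∈ inertia → ∀ (x : L) (hx : x ∈ integralClosure ℤ L)
      (hσx : σ x ∈ integralClosure ℤ L),
      Ideal.Quotient.mk 𝔭 ⟨σ x, hσx⟩ = Ideal.Quotient.mk 𝔭 ⟨x, hx⟩ := by
    intro σ hσ x hx hσx
    rw [Ideal.Quotient.eq]
    have hy : σ x - x ∈ integralClosure ℤ L := sub_mem hσx hx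
    have hmem := hσ ⟨x, hx⟩ ⟨σ x - x, hy⟩ rfl
    have he : (⟨σ x, hσx⟩ - ⟨x, hx⟩ : integralClosure ℤ L) = ⟨σ x - x, hy⟩ :=
      Subtype.ext (by simp)
    rw [he]
    exact hmem
  -- automorphisms permute roots
  have hroσ : ∀ (σ : L ≃ₐ[ℚ] L) (u : L), aeval u f = 0 → aeval (σ u) f = 0 := by
    intro σ u hu
    have h2 : aeval (σ u) f = σ (aeval u f) := by
      simpa using aeval_algHom_apply (AlgHom.restrictScalars ℤ σ.toAlgHom) u f
    rw [h2, hu, map_zero]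
  -- extensionality via roots
  have galext2 : ∀ σ τ : L ≃ₐ[ℚ] L, (∀ u : L, aeval u f = 0 → σ u = τ u) → σ = τ := by
    intro σ τ h
    apply Polynomial.Gal.ext (p := f.map (Int.castRingHom ℚ))
    intro x hx
    rw [mem_rootSet] at hx
    have hx2 := hx.2
    have hx3 : aeval x f = 0 := (aeval_map_algebraMap ℚ x f).symm.trans hx2
    exact h x hx3
  have galext : ∀ σ : L ≃ₐ[ℚ] L, (∀ u : L, aeval u f = 0 → σ u = u) → σ = 1 := by
    intro σ h
    exact galext2 σ 1 (by intro u hu; simpa using h u hu)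
  -- analysis of a nontrivial element of inertia
  have analysis : ∀ τ : L ≃ₐ[ℚ] L, τ ∈ inertia → τ ≠ 1 →
      ∃ r s : L, ∃ (hr : aeval r f = 0) (hs : aeval s f = 0), r ≠ s ∧ τ r = s ∧ τ s = r ∧
        Ideal.Quotient.mk 𝔭 ⟨r, hint r hr⟩ = ψ (c : ZMod p) ∧
        Ideal.Quotient.mk 𝔭 ⟨s, hint s hs⟩ = ψ (c : ZMod p) ∧
        ∀ u : L, aeval u f = 0 → u ≠ r → u ≠ s → τ u = u := by
    intro τ hτ hτne
    have hmv : ¬ ∀ u : L, aeval u f = 0 → τ u = u := fun h => hτne (galext τ h)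
    push_neg at hmv
    obtain ⟨r, hr, hmove⟩ := hmv
    have hs : aeval (τ r) f = 0 := hroσ τ r hr
    have hredsr : Ideal.Quotient.mk 𝔭 ⟨τ r, hint _ hs⟩ = Ideal.Quotient.mk 𝔭 ⟨r, hint r hr⟩ :=
      hred τ hτ r (hint r hr) (hint _ hs)
    have hsc : Ideal.Quotient.mk 𝔭 (⟨τ r, hint _ hs⟩ : integralClosure ℤ L) = ψ (c : ZMod p) :=
      keypair ⟨τ r, hint _ hs⟩ ⟨r, hint r hr⟩ hs hr hmove hredsr
    have hrc : Ideal.Quotient.mk 𝔭 (⟨r, hint r hr⟩ : integralClosure ℤ L) = ψ (c : ZMod p) := by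
      rw [← hredsr]
      exact hsc
    have hfix : ∀ u : L, aeval u f = 0 → u ≠ r → u ≠ τ r → τ u = u := by
      intro u hu hur hus
      by_contra hneq
      have hu' : aeval (τ u) f = 0 := hroσ τ u hu
      have hredu : Ideal.Quotient.mk 𝔭 ⟨τ u, hint _ hu'⟩ =
          Ideal.Quotient.mk 𝔭 ⟨u, hint u hu⟩ := hred τ hτ u (hint u hu) (hint _ hu')
      have huc : Ideal.Quotient.mk 𝔭 (⟨u, hint u hu⟩ : integralClosure ℤ L) =
          ψ (c : ZMod p) := by
        rw [← hredu]
        exact keypair ⟨τ u, hint _ hu'⟩ ⟨u, hint u hu⟩ hu' hu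
          (fun e => hneq e) hredu
      by_cases hh : τ u = r
      · exact keytriple ⟨u, hint u hu⟩ ⟨r, hint r hr⟩ ⟨τ r, hint _ hs⟩ hu hr hs
          hur hus (by exact fun e => hmove e.symm) (huc.trans hrc.symm) (huc.trans hsc.symm)
      · exact keytriple ⟨u, hint u hu⟩ ⟨τ u, hint _ hu'⟩ ⟨r, hint r hr⟩ hu hu' hr
          (fun e => hneq e.symm) hur hh (hredu.symm) (huc.trans hrc.symm)
    have hss : τ (τ r) = r := by
      by_contra hts
      have hs2 : τ (τ r) ≠ τ r := by
        intro e
        exact hmove (τ.injective e)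
      have h3 := hfix (τ (τ r)) (hroσ τ _ hs) hts hs2
      exact hs2 (τ.injective h3)
    exact ⟨r, τ r, hr, hs, Ne.symm hmove, rfl, hss, hrc, hsc, hfix⟩
  -- main dichotomy
  by_cases hcase : ∀ τ, τ ∈ inertia → τ = 1
  · left
    ext τ
    simp only [Set.mem_singleton_iff]
    exact ⟨fun h => hcase τ h, fun h => h ▸ hone⟩
  · right
    push_neg at hcase
    obtain ⟨σ, hσI, hσne⟩ := hcase
    obtain ⟨r, s, hr, hs, hrs, hτr, hτs, hrc, hsc, hfix⟩ := analysis σ hσI hσne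
    have hσσ : σ * σ = 1 := by
      apply galext
      intro u hu
      by_cases h1 : u = r
      · subst h1
        rw [AlgEquiv.mul_apply, hτr, hτs]
      by_cases h2 : u = s
      · subst h2
        rw [AlgEquiv.mul_apply, hτs, hτr]
      · rw [AlgEquiv.mul_apply, hfix u hu h1 h2, hfix u hu h1 h2]
    refine ⟨σ, ⟨r, s, hr, hs, hrs, hτr, hτs, hfix⟩, ?_⟩
    ext τ
    simp only [SetLike.mem_coe, Subgroup.mem_zpowers_iff]
    constructor
    · intro hτ
      by_cases hτ1 : τ = 1
      · exact ⟨0, by simp [hτ1]⟩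
      · obtain ⟨r', s', hr', hs', hrs', hτr', hτs', hrc', hsc', hfix'⟩ := analysis τ hτ hτ1
        have hr'mem : r' = r ∨ r' = s := by
          by_contra hcon
          push_neg at hcon
          exact keytriple ⟨r', hint _ hr'⟩ ⟨r, hint _ hr⟩ ⟨s, hint _ hs⟩ hr' hr hs
            hcon.1 hcon.2 hrs (hrc'.trans hrc.symm) (hrc'.trans hsc.symm)
        have hs'mem : s' = r ∨ s' = s := by
          by_contra hcon
          push_neg at hcon
          exact keytriple ⟨s', hint _ hs'⟩ ⟨r, hint _ hr⟩ ⟨s, hint _ hs⟩ hs' hr hs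
            hcon.1 hcon.2 hrs (hsc'.trans hrc.symm) (hsc'.trans hsc.symm)
        have hτσ : τ = σ := by
          apply galext2
          intro u hu
          by_cases h1 : u = r
          · rw [h1, hτr]
            rcases hr'mem with h | h
            · rcases hs'mem with h' | h'
              · exact absurd (h.trans h'.symm) hrs'
              · rw [← h, hτr', h']
            · rcases hs'mem with h' | h'
              · rw [← h', hτs', h]
              · exact absurd (h.trans h'.symm) hrs'
          by_cases h2 : u = s
          · rw [h2, hτs]
            rcases hr'mem with h | h
            · rcases hs'mem with h' | h'
              · exact absurd (h.trans h'.symm) hrs'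
              · rw [← h', hτs', h]
            · rcases hs'mem with h' | h'
              · rw [← h, hτr', h']
              · exact absurd (h.trans h'.symm) hrs'
          · rw [hfix u hu h1 h2]
            have hur' : u ≠ r' := by
              rcases hr'mem with h | h
              · rw [h]; exact h1
              · rw [h]; exact h2
            have hus' : u ≠ s' := by
              rcases hs'mem with h | h
              · rw [h]; exact h1
              · rw [h]; exact h2
            exact hfix' u hu hur' hus'
        exact ⟨1, by simpa using hτσ.symm⟩
    · rintro ⟨k, rfl⟩
      have hk : σ ^ k = 1 ∨ σ ^ k = σ := by
        rcases Int.even_or_odd k with ⟨m, hm⟩ | ⟨m, hm⟩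
        · left
          subst hm
          rw [← two_mul, zpow_mul]
          have h2 : σ ^ (2 : ℤ) = 1 := by
            rw [(by norm_num : (2 : ℤ) = 1 + 1), zpow_add, zpow_one]
            exact hσσ
          rw [h2, one_zpow]
        · right
          subst hm
          rw [zpow_add, zpow_one, zpow_mul]
          have h2 : σ ^ (2 : ℤ) = 1 := by
            rw [(by norm_num : (2 : ℤ) = 1 + 1), zpow_add, zpow_one]
            exact hσσ
          rw [h2, one_zpow, one_mul]
      rcases hk with h | h
      · rw [h]; exact hone
      · rw [h]; exact hσI
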